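/- arXiv:math/0305223 — 3 statements merged into one kernel-verified Lean document; each statement's English description precedes it below -/
import Mathlib

section
/- For R > 0, p ≥ 1 and d = R e^{-(p+1)/4}, the Moser function m_d satisfies ‖m_d‖_{L^{p+1}(ℝ²)}² ≥ (p+1)(8πe)^{-1}(πR²)^{2/(p+1)}. -/
open MeasureTheory Real

noncomputable def moser (R d : ℝ) (x : EuclideanSpace ℝ (Fin 2)) : ℝ :=
  if ‖x‖ ≤ d then (Real.sqrt (2 * π))⁻¹ * Real.sqrt (Real.log (R / d))
  else if ‖x‖ ≤ R then (Real.sqrt (2 * π))⁻¹ * Real.log (R / ‖x‖) / Real.sqrt (Real.log (R / d))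
  else 0

/-- with `d = R e^{-(p+1)/4}`, the Moser function satisfies
`‖m_d‖²_{L^{p+1}} ≥ (p+1)(8πe)⁻¹ (πR²)^{2/(p+1)}`. -/
theorem stmt2 (R p : ℝ) (hR : 0 < R) (hp : 1 ≤ p) :
    (p + 1) * (8 * π * Real.exp 1)⁻¹ * (π * R ^ 2) ^ (2 / (p + 1)) ≤
      (∫ x : EuclideanSpace ℝ (Fin 2), |moser R (R * Real.exp (-(p + 1) / 4)) x| ^ (p + 1)) ^
        (2 / (p + 1)) := by
  set d : ℝ := R * Real.exp (-(p + 1) / 4) with hd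
  have hp1 : (0:ℝ) < p + 1 := by linarith
  have hd0 : 0 < d := mul_pos hR (Real.exp_pos _)
  have hdR : d ≤ R := by
    have : Real.exp (-(p + 1) / 4) ≤ 1 := Real.exp_le_one_iff.mpr (by nlinarith)
    nlinarith
  have hlog : Real.log (R / d) = (p + 1) / 4 := by
    rw [hd, div_mul_eq_div_div, div_self hR.ne', one_div, ← Real.exp_neg, Real.log_exp]
    ring
  set c : ℝ := (Real.sqrt (2 * π))⁻¹ * Real.sqrt ((p + 1) / 4) with hc
  have hc0 : 0 ≤ c := mul_nonneg (inv_nonneg.mpr (Real.sqrt_nonneg _)) (Real.sqrt_nonneg _)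
  -- pointwise facts
  have hmo_nonneg : ∀ x : EuclideanSpace ℝ (Fin 2), 0 ≤ moser R d x := by
    intro x
    unfold moser
    split_ifs with h1 h2
    · exact mul_nonneg (inv_nonneg.mpr (Real.sqrt_nonneg _)) (Real.sqrt_nonneg _)
    · apply div_nonneg _ (Real.sqrt_nonneg _)
      apply mul_nonneg (inv_nonneg.mpr (Real.sqrt_nonneg _))
      apply Real.log_nonneg
      rw [le_div_iff₀ (lt_of_le_of_lt hd0.le (lt_of_not_ge h1))]
      simpa using h2
    · exact le_rfl
  have hmo_le : ∀ x : EuclideanSpace ℝ (Fin 2), moser R d x ≤ c := by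
    intro x
    unfold moser
    split_ifs with h1 h2
    · rw [hc, hlog]
    · rw [hc, mul_div_assoc, hlog]
      apply mul_le_mul_of_nonneg_left _ (inv_nonneg.mpr (Real.sqrt_nonneg _))
      rw [div_le_iff₀ (by positivity : (0:ℝ) < Real.sqrt ((p+1)/4)),
        Real.mul_self_sqrt (by positivity : (0:ℝ) ≤ (p+1)/4)]
      calc Real.log (R / ‖x‖) ≤ Real.log (R / d) := by
            apply Real.log_le_log (div_pos hR (hd0.trans (lt_of_not_ge h1)))
            exact div_le_div_of_nonneg_left hR.le hd0 (le_of_not_ge h1)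
        _ = (p+1)/4 := hlog
    · exact hc0
  have hmo_const : ∀ x : EuclideanSpace ℝ (Fin 2), ‖x‖ ≤ d → moser R d x = c := by
    intro x hx
    unfold moser
    rw [if_pos hx, hc, hlog]
  -- the integrand
  set f : EuclideanSpace ℝ (Fin 2) → ℝ := fun x => |moser R d x| ^ (p + 1) with hf
  have hf_eq : ∀ x, f x = (moser R d x) ^ (p + 1) := by
    intro x; rw [hf]; simp only [abs_of_nonneg (hmo_nonneg x)]
  have hf_nonneg : ∀ x, 0 ≤ f x := fun x => by
    rw [hf_eq]; exact Real.rpow_nonneg (hmo_nonneg x) _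
  have hf_le : ∀ x, f x ≤ c ^ (p + 1) := fun x => by
    rw [hf_eq]; exact Real.rpow_le_rpow (hmo_nonneg x) (hmo_le x) hp1.le
  have hmeas : Measurable (moser R d) := by
    unfold moser
    apply Measurable.ite (measurableSet_le measurable_norm measurable_const)
      measurable_const
    apply Measurable.ite (measurableSet_le measurable_norm measurable_const)
    · exact ((measurable_const.mul
        (Real.measurable_log.comp (measurable_const.div measurable_norm))).div
        measurable_const)
    · exact measurable_const
  have hfmeas : Measurable f := by
    rw [hf]
    exact (hmeas.abs).pow_const _ |>.comp measurable_id |>.mono le_rfl le_rfl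
  -- support
  have hsupp : Function.support f ⊆ Metric.closedBall 0 R := by
    intro x hx
    simp only [Metric.mem_closedBall, dist_zero_right]
    by_contra h
    push_neg at h
    apply hx
    rw [hf_eq]
    have : moser R d x = 0 := by
      unfold moser
      rw [if_neg (by linarith [lt_of_le_of_lt hdR h]), if_neg (by linarith)]
    rw [this, Real.zero_rpow hp1.ne']
  -- integrability
  have hint : Integrable f := by
    rw [← integrableOn_iff_integrable_of_support_subset hsupp]
    apply Measure.integrableOn_of_bounded (measure_closedBall_lt_top).ne
      hfmeas.aestronglyMeasurable
    filter_upwards with x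
    rw [Real.norm_eq_abs, abs_of_nonneg (hf_nonneg x)]
    exact hf_le x
  -- lower bound by the ball
  have hball : ∫ x in Metric.ball (0 : EuclideanSpace ℝ (Fin 2)) d, f x
      = (π * d ^ 2) * c ^ (p + 1) := by
    rw [setIntegral_congr_fun measurableSet_ball (g := fun _ => c ^ (p + 1))
      (fun x hx => by
        rw [hf_eq, hmo_const x (le_of_lt (by simpa using hx))]),
      setIntegral_const, smul_eq_mul]
    congr 1
    rw [measureReal_def, EuclideanSpace.volume_ball]
    simp only [Fintype.card_fin]
    rw [show ((2:ℕ):ℝ)/2 + 1 = 2 by norm_num, Real.Gamma_two]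
    rw [ENNReal.toReal_mul, ENNReal.toReal_pow, ENNReal.toReal_ofReal hd0.le,
      ENNReal.toReal_ofReal (by positivity)]
    rw [Real.sq_sqrt Real.pi_pos.le]
    ring
  have hlb : (π * d ^ 2) * c ^ (p + 1) ≤ ∫ x, f x := by
    rw [← hball]
    exact setIntegral_le_integral hint (Filter.Eventually.of_forall hf_nonneg)
  -- conclude
  have key : ((π * d ^ 2) * c ^ (p + 1)) ^ (2 / (p + 1))
      = (p + 1) * (8 * π * Real.exp 1)⁻¹ * (π * R ^ 2) ^ (2 / (p + 1)) := by
    have hπd : π * d ^ 2 = (π * R ^ 2) * Real.exp 1 ^ (-(p+1)/2) := by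
      rw [hd, Real.exp_one_rpow, mul_pow, ← Real.exp_nat_mul]
      ring_nf
    rw [Real.mul_rpow (by positivity) (Real.rpow_nonneg hc0 _), hπd,
      Real.mul_rpow (by positivity) (by positivity),
      ← Real.rpow_mul (Real.exp_pos 1).le,
      show -(p+1)/2 * (2/(p+1)) = -1 by field_simp,
      Real.rpow_neg_one,
      ← Real.rpow_mul hc0,
      show (p+1) * (2/(p+1)) = 2 by field_simp,
      Real.rpow_two, hc, mul_pow, inv_pow,
      Real.sq_sqrt (by positivity : (0:ℝ) ≤ 2*π),
      Real.sq_sqrt (by positivity : (0:ℝ) ≤ (p+1)/4)]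
    have hπ : π ≠ 0 := Real.pi_ne_zero
    have he : Real.exp 1 ≠ 0 := (Real.exp_pos 1).ne'
    field_simp
    ring
  rw [← key]
  exact Real.rpow_le_rpow (by positivity) hlb (by positivity)
end

section
/- Let Ω ⊂ ℝ² be a bounded smooth domain, λ ≥ 0, p > 1, and let u be a positive solution of -Δu + λu = u^p in Ω, u = 0 on ∂Ω, which is a minimizer: (∫|∇u|² + λ∫u²)/(∫u^{p+1})^{2/(p+1)} = c_{λ,p}² where c_{λ,p}² = inf over nonzero H¹₀ functions of the same quotient. If c_{λ,p} ≤ c p^{-1/2} for some constant c, then there exists C > 0 (independent of p) such that p ∫_Ω u^{p+1} ≤ C and p(∫_Ω |∇u|² + ∫_Ω u²) ≤ C for p large. -/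
open MeasureTheory Real

set_option maxHeartbeats 1000000 in
/-- if the least-energy levels satisfy `c_{λ,p} ≤ c p^{-1/2}`, then the
minimizers `u_p` (which satisfy the natural energy identities) obey
`p ∫ u_p^{p+1} ≤ C` and `p (∫ |∇u_p|² + ∫ u_p²) ≤ C` for `p` large. -/
theorem stmt3 (Ω : Set (EuclideanSpace ℝ (Fin 2))) (hΩ : IsOpen Ω)
    (hb : Bornology.IsBounded Ω) (lam c : ℝ) (hlam : 0 < lam) (hc : 0 < c)
    (u : ℝ → EuclideanSpace ℝ (Fin 2) → ℝ) (cc : ℝ → ℝ)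
    (hpos : ∀ p > 1, ∀ x ∈ Ω, 0 < u p x)
    (hidentity : ∀ p > 1,
      (∫ x in Ω, ‖gradient (u p) x‖ ^ 2) + lam * ∫ x in Ω, (u p x) ^ 2 =
        ∫ x in Ω, u p x ^ (p + 1))
    (hmin : ∀ p > 1,
      (cc p) ^ 2 * (∫ x in Ω, u p x ^ (p + 1)) ^ (2 / (p + 1)) =
        (∫ x in Ω, ‖gradient (u p) x‖ ^ 2) + lam * ∫ x in Ω, (u p x) ^ 2)
    (hcc : ∀ p > 1, 0 ≤ cc p ∧ cc p ≤ c * p ^ (-(1 : ℝ) / 2)) :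
    ∃ C > 0, ∃ p₀ > 1, ∀ p ≥ p₀,
      p * ∫ x in Ω, u p x ^ (p + 1) ≤ C ∧
      p * ((∫ x in Ω, ‖gradient (u p) x‖ ^ 2) + ∫ x in Ω, (u p x) ^ 2) ≤ C := by
  set M : ℝ := (max c 1) ^ (4 : ℕ) with hM
  have hmax1 : (1 : ℝ) ≤ max c 1 := le_max_right _ _
  have hMpos : 0 < M := by positivity
  refine ⟨(1 + 1 / lam) * M, by positivity, 3, by norm_num, ?_⟩
  intro p hp
  have hp1 : (1 : ℝ) < p := by linarith
  have hp0 : (0 : ℝ) < p := by linarith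
  obtain ⟨hcc0, hccle⟩ := hcc p hp1
  set G := ∫ x in Ω, ‖gradient (u p) x‖ ^ 2 with hGdef
  set S := ∫ x in Ω, (u p x) ^ 2 with hSdef
  set I := ∫ x in Ω, u p x ^ (p + 1) with hIdef
  have hG : 0 ≤ G := integral_nonneg fun x => by positivity
  have hS : 0 ≤ S := integral_nonneg fun x => by positivity
  have hid : G + lam * S = I := hidentity p hp1
  have hI0 : 0 ≤ I := by nlinarith
  -- main bound : p * I ≤ M
  have hkey : p * I ≤ M := by
    rcases hI0.eq_or_lt with h0 | hIpos
    · rw [← h0]; simpa using hMpos.le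
    · have hmin' : cc p ^ 2 * I ^ (2 / (p + 1)) = I := by
        rw [hmin p hp1, hid]
      set q : ℝ := (p + 1) / (p - 1) with hq
      have hpm1 : (0 : ℝ) < p - 1 := by linarith
      have hpp1 : (0 : ℝ) < p + 1 := by linarith
      have hq1 : 1 ≤ q := by rw [hq, le_div_iff₀ hpm1]; linarith
      have hq0 : 0 ≤ q := by linarith
      have hq2 : q ≤ 2 := by rw [hq, div_le_iff₀ hpm1]; linarith
      have hsplit : I = I ^ (2 / (p + 1)) * I ^ ((p - 1) / (p + 1)) := by
        rw [← Real.rpow_add hIpos, ← add_div]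
        have h : (2 + (p - 1)) / (p + 1) = 1 := by field_simp; ring
        rw [h, Real.rpow_one]
      have hIpow : 0 < I ^ (2 / (p + 1)) := Real.rpow_pos_of_pos hIpos _
      have hcc2 : cc p ^ 2 = I ^ ((p - 1) / (p + 1)) := by
        have h := hmin'
        rw [hsplit] at h
        have h' : I ^ (2 / (p + 1)) * cc p ^ 2 =
            I ^ (2 / (p + 1)) * I ^ ((p - 1) / (p + 1)) := by linarith [h]
        exact mul_left_cancel₀ (ne_of_gt hIpow) h'
      have hIeq : I = (cc p ^ 2) ^ q := by
        rw [hcc2, ← Real.rpow_mul hI0]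
        have h : (p - 1) / (p + 1) * q = 1 := by rw [hq]; field_simp
        rw [h, Real.rpow_one]
      have hb1 : cc p ^ 2 ≤ c ^ 2 * p ^ (-(1 : ℝ)) := by
        have h1 : cc p ^ 2 ≤ (c * p ^ (-(1 : ℝ) / 2)) ^ 2 := pow_le_pow_left₀ hcc0 hccle 2
        have h2 : (c * p ^ (-(1 : ℝ) / 2)) ^ 2 = c ^ 2 * p ^ (-(1 : ℝ)) := by
          rw [mul_pow, ← Real.rpow_natCast (p ^ (-(1 : ℝ) / 2)) 2, ← Real.rpow_mul hp0.le]
          norm_num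
        linarith
      have hbound : I ≤ (c ^ 2 * p ^ (-(1 : ℝ))) ^ q := by
        rw [hIeq]; exact Real.rpow_le_rpow (sq_nonneg _) hb1 hq0
      have hmul : (c ^ 2 * p ^ (-(1 : ℝ))) ^ q = (c ^ 2) ^ q * p ^ (-(1 : ℝ) * q) := by
        rw [Real.mul_rpow (sq_nonneg c) (Real.rpow_nonneg hp0.le _), ← Real.rpow_mul hp0.le]
      have hcq : (c ^ 2) ^ q ≤ M := by
        have h1 : (c ^ 2) ^ q ≤ ((max c 1) ^ 2) ^ q :=
          Real.rpow_le_rpow (sq_nonneg c) (pow_le_pow_left₀ hc.le (le_max_left c 1) 2) hq0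
        have h2 : ((max c 1) ^ 2) ^ q ≤ ((max c 1) ^ 2) ^ (2 : ℝ) :=
          Real.rpow_le_rpow_of_exponent_le (by nlinarith) hq2
        have h3 : ((max c 1) ^ 2) ^ (2 : ℝ) = M := by
          rw [show ((2 : ℝ)) = ((2 : ℕ) : ℝ) by norm_num, Real.rpow_natCast, hM]; ring
        exact le_trans h1 (le_trans h2 (le_of_eq h3))
      have hpq : p * p ^ (-(1 : ℝ) * q) ≤ 1 := by
        rw [show p * p ^ (-(1 : ℝ) * q) = p ^ (1 + -(1 : ℝ) * q) from by
          rw [Real.rpow_add hp0, Real.rpow_one]]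
        exact Real.rpow_le_one_of_one_le_of_nonpos hp1.le (by nlinarith)
      calc p * I ≤ p * ((c ^ 2) ^ q * p ^ (-(1 : ℝ) * q)) := by
            rw [← hmul]; exact mul_le_mul_of_nonneg_left hbound hp0.le
        _ = (c ^ 2) ^ q * (p * p ^ (-(1 : ℝ) * q)) := by ring
        _ ≤ M * 1 := mul_le_mul hcq hpq (by positivity) hMpos.le
        _ = M := mul_one M
  constructor
  · nlinarith [mul_pos (one_div_pos.mpr hlam) hMpos]
  · rw [← mul_le_mul_iff_right₀ hlam]
    have heq : lam * ((1 + 1 / lam) * M) = (lam + 1) * M := by field_simp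
    rw [heq]
    have hX : 0 ≤ p * G := mul_nonneg hp0.le hG
    have hY : 0 ≤ p * S := mul_nonneg hp0.le hS
    have hpid : p * G + lam * (p * S) = p * I := by rw [← hid]; ring
    have hA : lam * (p * S) ≤ M := by linarith
    have hpid2 : lam * (p * G) + lam * (lam * (p * S)) = lam * (p * I) := by
      rw [← hid]; ring
    have hB : lam * (p * G) ≤ lam * M := by
      nlinarith [mul_le_mul_of_nonneg_left hkey hlam.le,
        mul_nonneg hlam.le (mul_nonneg hlam.le hY)]
    nlinarith [hA, hB]
end

section
/- Let k ≥ 2 be an integer. Then the ODE -ψ''(r) - (1/r)ψ'(r) + k²ψ(r)/r² = (1 + r²/8)^{-2} ψ(r) on (0,∞) admits no nontrivial bounded solution ψ with ψ(0) = 0 (i.e., extending continuously to 0 with value 0). -/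
open Real Set Filter Topology

noncomputable section

/-- The mode-1 solution `ζ₁(r) = r/(1+r²/8)`. -/
def zS (r : ℝ) : ℝ := r / (1 + r^2/8)

/-- Its derivative. -/
def zS' (r : ℝ) : ℝ := (1 - r^2/8) / (1 + r^2/8)^2

/-- The Wronskian-type function `η(r) = r (ζ₁ ψ' - ζ₁' ψ)`. -/
def etaF (ψ : ℝ → ℝ) (r : ℝ) : ℝ := r * (zS r * deriv ψ r - zS' r * ψ r)

lemma D_pos (r : ℝ) : 0 < 1 + r^2/8 := by positivity

lemma zS_pos {r : ℝ} (hr : 0 < r) : 0 < zS r := by unfold zS; positivity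

lemma zS_hasDeriv (r : ℝ) : HasDerivAt zS (zS' r) r := by
  have hD : HasDerivAt (fun x : ℝ => 1 + x^2/8) (r/4) r := by
    have := ((hasDerivAt_pow 2 r).div_const 8).const_add 1
    exact this.congr_deriv (by norm_num <;> ring)
  have h := (hasDerivAt_id r).div hD (ne_of_gt (D_pos r))
  refine h.congr_deriv ?_
  simp only [id_eq]
  unfold zS'
  have := (D_pos r).ne'
  field_simp
  ring

lemma zS'_hasDeriv (r : ℝ) :
    HasDerivAt zS' ((-(r/4)*(3 - r^2/8))/(1+r^2/8)^3) r := by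
  have hN : HasDerivAt (fun x : ℝ => 1 - x^2/8) (-(r/4)) r := by
    have := ((hasDerivAt_pow 2 r).div_const 8).const_sub 1
    exact this.congr_deriv (by norm_num <;> ring)
  have hD0 : HasDerivAt (fun x : ℝ => 1 + x^2/8) (r/4) r := by
    have := ((hasDerivAt_pow 2 r).div_const 8).const_add 1
    exact this.congr_deriv (by norm_num <;> ring)
  have hD : HasDerivAt (fun x : ℝ => (1 + x^2/8)^2) (2*(1+r^2/8)^1*(r/4)) r := by
    exact (hD0.pow 2).congr_deriv (by norm_num)
  have h := hN.div hD (by positivity)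
  refine h.congr_deriv ?_
  have := (D_pos r).ne'
  field_simp
  ring

/-- The key Wronskian identity: `η' = (k² - 1) ψ ζ₁ / r`. -/
lemma eta_deriv (k : ℕ) (ψ : ℝ → ℝ) {r : ℝ} (hr : 0 < r)
    (h1 : DifferentiableAt ℝ ψ r) (h2 : DifferentiableAt ℝ (deriv ψ) r)
    (hode : -(deriv (deriv ψ) r) - (1 / r) * deriv ψ r + (k : ℝ) ^ 2 * ψ r / r ^ 2 =
        ((1 + r ^ 2 / 8) ^ 2)⁻¹ * ψ r) :
    HasDerivAt (etaF ψ) (((k:ℝ)^2 - 1) * ψ r * zS r / r) r := by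
  have hψ := h1.hasDerivAt
  have hψ' := h2.hasDerivAt
  have h := (hasDerivAt_id r).mul
    (((zS_hasDeriv r).mul hψ').sub ((zS'_hasDeriv r).mul hψ))
  refine h.congr_deriv ?_
  simp only [id_eq, Pi.mul_apply, Pi.sub_apply]
  have hψ'' : deriv (deriv ψ) r =
      -(1/r) * deriv ψ r + (k:ℝ)^2 * ψ r / r^2 - ((1 + r ^ 2 / 8) ^ 2)⁻¹ * ψ r := by
    linarith [hode]
  rw [hψ'']
  unfold zS zS'
  have hD := (D_pos r).ne'
  have hrne := hr.ne'
  field_simp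
  ring

lemma etaF_contAt (ψ : ℝ → ℝ) {r : ℝ}
    (h1 : DifferentiableAt ℝ ψ r) (h2 : DifferentiableAt ℝ (deriv ψ) r) :
    ContinuousAt (etaF ψ) r := by
  exact continuousAt_id.mul
    ((((zS_hasDeriv r).differentiableAt.continuousAt).mul h2.continuousAt).sub
      (((zS'_hasDeriv r).differentiableAt.continuousAt).mul h1.continuousAt))

lemma etaF_strictMono (k : ℕ) (hk : 2 ≤ k) (ψ : ℝ → ℝ)
    (hdiff : ∀ r ∈ Set.Ioi (0 : ℝ), DifferentiableAt ℝ ψ r)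
    (hdiff2 : ∀ r ∈ Set.Ioi (0 : ℝ), DifferentiableAt ℝ (deriv ψ) r)
    (hode : ∀ r ∈ Set.Ioi (0 : ℝ),
      -(deriv (deriv ψ) r) - (1 / r) * deriv ψ r + (k : ℝ) ^ 2 * ψ r / r ^ 2 =
        ((1 + r ^ 2 / 8) ^ 2)⁻¹ * ψ r)
    {u v : ℝ} (hu : 0 < u) (huv : u < v)
    (hpos : ∀ x ∈ Set.Ioo u v, 0 < ψ x) :
    StrictMonoOn (etaF ψ) (Set.Icc u v) := by
  apply strictMonoOn_of_deriv_pos (convex_Icc u v)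
  · intro x hx
    have hx0 : 0 < x := lt_of_lt_of_le hu hx.1
    exact (etaF_contAt ψ (hdiff x hx0) (hdiff2 x hx0)).continuousWithinAt
  · intro x hx
    rw [interior_Icc] at hx
    have hx0 : 0 < x := lt_trans hu hx.1
    rw [(eta_deriv k ψ hx0 (hdiff x hx0) (hdiff2 x hx0) (hode x hx0)).deriv]
    have hk2 : (2:ℝ) ≤ (k:ℝ) := by exact_mod_cast hk
    have : (0:ℝ) < (k:ℝ)^2 - 1 := by nlinarith
    exact div_pos (mul_pos (mul_pos this (hpos x hx)) (zS_pos hx0)) hx0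

lemma deriv_nonpos_left (ψ : ℝ → ℝ) {a b : ℝ} (hab : a < b)
    (hd : DifferentiableAt ℝ ψ b) (hψb : ψ b = 0)
    (h : ∀ x ∈ Set.Ioo a b, 0 ≤ ψ x) : deriv ψ b ≤ 0 := by
  have hds := hd.hasDerivAt
  rw [hasDerivAt_iff_tendsto_slope] at hds
  have hmono : 𝓝[<] b ≤ 𝓝[≠] b :=
    nhdsWithin_mono _ (fun x hx => ne_of_lt hx)
  have hle : ∀ᶠ x in 𝓝[<] b, slope ψ b x ≤ 0 := by
    filter_upwards [Ioo_mem_nhdsLT_of_mem ⟨hab, le_refl b⟩] with x hx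
    rw [slope_def_field]
    have : ψ x ≥ 0 := h x hx
    rw [div_eq_mul_inv]
    apply mul_nonpos_of_nonneg_of_nonpos
    · simp [hψb]; linarith
    · simp only [inv_nonpos, sub_nonpos]; exact le_of_lt hx.2
  exact le_of_tendsto (hds.mono_left hmono) hle

lemma deriv_nonneg_right (ψ : ℝ → ℝ) {a b : ℝ} (hab : a < b)
    (hd : DifferentiableAt ℝ ψ a) (hψa : ψ a = 0)
    (h : ∀ x ∈ Set.Ioo a b, 0 ≤ ψ x) : 0 ≤ deriv ψ a := by
  have hds := hd.hasDerivAt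
  rw [hasDerivAt_iff_tendsto_slope] at hds
  have hmono : 𝓝[>] a ≤ 𝓝[≠] a :=
    nhdsWithin_mono _ (fun x hx => ne_of_gt hx)
  have hle : ∀ᶠ x in 𝓝[>] a, 0 ≤ slope ψ a x := by
    filter_upwards [Ioo_mem_nhdsGT_of_mem ⟨le_refl a, hab⟩] with x hx
    rw [slope_def_field]
    apply div_nonneg
    · simp [hψa]; linarith [h x hx]
    · linarith [hx.1]
  exact ge_of_tendsto (hds.mono_left hmono) hle

/-- If the derivative is `≤ c/r²` with `c < 0` near the origin, the function blows
up, contradicting continuity with value `0` at `0`. -/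
lemma no_blowup_zero (ψ : ℝ → ℝ) (hcont : ContinuousWithinAt ψ (Set.Ici 0) 0)
    (hψ0 : ψ 0 = 0) {c δ : ℝ} (hc : c < 0) (hδ : 0 < δ)
    (hd : ∀ r ∈ Set.Ioc (0:ℝ) δ, DifferentiableAt ℝ ψ r)
    (hb : ∀ r ∈ Set.Ioc (0:ℝ) δ, deriv ψ r ≤ c / r^2) : False := by
  set F : ℝ → ℝ := fun r => ψ r + c / r with hF
  have hFd : ∀ r ∈ Set.Ioc (0:ℝ) δ, HasDerivAt F (deriv ψ r + c * -(r^2)⁻¹) r := by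
    intro r hr
    have h1 := (hd r hr).hasDerivAt
    have h2 := (hasDerivAt_inv hr.1.ne').const_mul c
    show HasDerivAt (fun y => ψ y + c / y) _ r
    simp only [div_eq_mul_inv]
    exact h1.add h2
  have key : ∀ t ∈ Set.Ioc (0:ℝ) δ, F δ ≤ F t := by
    intro t ht
    have hanti : AntitoneOn F (Set.Icc t δ) := by
      apply antitoneOn_of_deriv_nonpos (convex_Icc t δ)
      · intro x hx
        have hx' : x ∈ Set.Ioc (0:ℝ) δ := ⟨lt_of_lt_of_le ht.1 hx.1, hx.2⟩
        exact (hFd x hx').differentiableAt.continuousAt.continuousWithinAt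
      · intro x hx
        rw [interior_Icc] at hx
        have hx' : x ∈ Set.Ioc (0:ℝ) δ := ⟨lt_trans ht.1 hx.1, le_of_lt hx.2⟩
        exact ((hFd x hx').differentiableAt).differentiableWithinAt
      · intro x hx
        rw [interior_Icc] at hx
        have hx' : x ∈ Set.Ioc (0:ℝ) δ := ⟨lt_trans ht.1 hx.1, le_of_lt hx.2⟩
        rw [(hFd x hx').deriv]
        have := hb x hx'
        have hx2 : (0:ℝ) < x^2 := pow_pos hx'.1 2
        have : c * -(x ^ 2)⁻¹ = -(c/x^2) := by field_simp
        rw [this]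
        linarith [hb x hx']
    exact hanti (Set.mem_Icc.mpr ⟨le_refl t, ht.2⟩) (Set.mem_Icc.mpr ⟨ht.2, le_refl δ⟩) ht.2
  -- continuity at 0 gives small values
  have ht0 : Filter.Tendsto ψ (nhdsWithin 0 (Set.Ici 0)) (nhds 0) := by
    have := hcont; rw [ContinuousWithinAt, hψ0] at this; exact this
  have habs : Filter.Tendsto (fun t => |ψ t|) (nhdsWithin 0 (Set.Ici 0)) (nhds 0) := by
    simpa using ht0.abs
  have hev : ∀ᶠ t in nhdsWithin 0 (Set.Ici 0), |ψ t| < 1 :=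
    habs.eventually_lt_const one_pos
  rw [Filter.eventually_iff, Metric.mem_nhdsWithin_iff] at hev
  obtain ⟨ε, hε, hball⟩ := hev
  set K := ψ δ + c / δ with hK
  set t := min (min δ (ε/2)) ((-c)/(|K|+2)) with htdef
  have habsK : (0:ℝ) < |K| + 2 := by positivity
  have ht0' : 0 < t := by
    apply lt_min (lt_min hδ (by linarith))
    apply div_pos (by linarith) habsK
  have htδ : t ≤ δ := le_trans (min_le_left _ _) (min_le_left _ _)
  have htmem : t ∈ Set.Ioc (0:ℝ) δ := ⟨ht0', htδ⟩
  have hsmall : |ψ t| < 1 := by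
    apply hball
    constructor
    · rw [Metric.mem_ball, Real.dist_eq, sub_zero, abs_of_pos ht0']
      calc t ≤ ε/2 := le_trans (min_le_left _ _) (min_le_right _ _)
        _ < ε := by linarith
    · exact le_of_lt ht0'
  have hlarge : |K| + 2 ≤ (-c)/t := by
    rw [le_div_iff₀ ht0']
    have : t ≤ (-c)/(|K|+2) := min_le_right _ _
    calc (|K| + 2) * t ≤ (|K| + 2) * ((-c)/(|K|+2)) := by
          apply mul_le_mul_of_nonneg_left this (le_of_lt habsK)
      _ = -c := by field_simp
  have hFt := key t htmem
  have : ψ t ≥ K + (-c)/t := by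
    have hct : c / t = -((-c)/t) := by ring
    simp only [hF] at hFt
    rw [hct] at hFt
    linarith [hFt]
  have h1 : ψ t < 1 := lt_of_abs_lt hsmall
  have h2 : -|K| ≤ K := neg_abs_le K
  clear_value t K
  linarith [hlarge, this, h1, h2]

/-- A function with derivative bounded below by `ε > 0` on `[R, ∞)` is unbounded. -/
lemma no_blowup_infty (ψ : ℝ → ℝ) {M R ε : ℝ} (hε : 0 < ε)
    (hbdd : ∀ r : ℝ, 0 ≤ r → |ψ r| ≤ M) (hR : 0 < R)
    (hd : ∀ r ∈ Set.Ici R, DifferentiableAt ℝ ψ r)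
    (hb : ∀ r ∈ Set.Ici R, ε ≤ deriv ψ r) : False := by
  have hM : 0 ≤ M := le_trans (abs_nonneg _) (hbdd R (le_of_lt hR))
  set X := R + (2*M+2)/ε with hX
  have hRX : R < X := by
    have h0 : 0 < (2*M+2)/ε := div_pos (by linarith) hε
    rw [hX]
    linarith
  set G : ℝ → ℝ := fun x => ψ x - ε * x with hG
  have hGd : ∀ r ∈ Set.Ici R, HasDerivAt G (deriv ψ r - ε) r := by
    intro r hr
    show HasDerivAt (fun x => ψ x - ε * x) _ r
    exact (((hd r hr).hasDerivAt).sub ((hasDerivAt_id r).const_mul ε)).congr_deriv (by simp)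
  have hmono : MonotoneOn G (Set.Icc R X) := by
    apply monotoneOn_of_deriv_nonneg (convex_Icc R X)
    · intro x hx
      exact (hGd x hx.1).differentiableAt.continuousAt.continuousWithinAt
    · intro x hx
      rw [interior_Icc] at hx
      exact ((hGd x (le_of_lt hx.1)).differentiableAt).differentiableWithinAt
    · intro x hx
      rw [interior_Icc] at hx
      rw [(hGd x (le_of_lt hx.1)).deriv]
      linarith [hb x (le_of_lt hx.1)]
  have h := hmono (Set.mem_Icc.mpr ⟨le_refl R, le_of_lt hRX⟩)
    (Set.mem_Icc.mpr ⟨le_of_lt hRX, le_refl X⟩) (le_of_lt hRX)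
  simp only [hG] at h
  have hεX : ε * X = ε * R + (2*M+2) := by
    rw [hX]; field_simp
  have h1 : ψ X ≥ ψ R + 2*M + 2 := by linarith
  have h2 := hbdd X (by linarith)
  have h3 := hbdd R (le_of_lt hR)
  have := abs_le.mp h2
  have := abs_le.mp h3
  linarith [this.1]

lemma zS_le {r : ℝ} (hr : 0 < r) : zS r ≤ r := by
  unfold zS
  apply div_le_self (le_of_lt hr)
  nlinarith

lemma abs_zS'_le_one {r : ℝ} (hr1 : r ≤ 1) (hr0 : 0 ≤ r) : |zS' r| ≤ 1 := by
  unfold zS'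
  rw [abs_div, abs_of_pos (by positivity : (0:ℝ) < (1 + r^2/8)^2)]
  rw [div_le_one (by positivity)]
  have h1 : |1 - r^2/8| ≤ 1 := by
    rw [abs_le]; constructor <;> nlinarith
  nlinarith [sq_nonneg r, sq_nonneg (r^2)]

/-- If `η ≤ c < 0` on a right neighbourhood of `0`, we get a contradiction. -/
lemma eta_neg_contra (ψ : ℝ → ℝ) (hcont : ContinuousOn ψ (Set.Ici 0))
    (hψ0 : ψ 0 = 0)
    (hdiff : ∀ r ∈ Set.Ioi (0 : ℝ), DifferentiableAt ℝ ψ r)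
    {c δ : ℝ} (hc : c < 0) (hδ : 0 < δ) (hδ1 : δ ≤ 1)
    (hη : ∀ t ∈ Set.Ioc (0:ℝ) δ, etaF ψ t ≤ c) : False := by
  have hcw : ContinuousWithinAt ψ (Set.Ici 0) 0 := hcont 0 (Set.self_mem_Ici)
  have ht0 : Filter.Tendsto ψ (nhdsWithin 0 (Set.Ici 0)) (nhds 0) := by
    have := hcw; rw [ContinuousWithinAt, hψ0] at this; exact this
  have habs : Filter.Tendsto (fun t => |ψ t|) (nhdsWithin 0 (Set.Ici 0)) (nhds 0) := by
    simpa using ht0.abs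
  have hev : ∀ᶠ t in nhdsWithin 0 (Set.Ici 0), |ψ t| < -c/4 :=
    habs.eventually_lt_const (by linarith)
  rw [Filter.eventually_iff, Metric.mem_nhdsWithin_iff] at hev
  obtain ⟨ε, hε, hball⟩ := hev
  set δ' := min δ (ε/2) with hδ'def
  have hδ'0 : 0 < δ' := lt_min hδ (by linarith)
  have hδ'δ : δ' ≤ δ := min_le_left _ _
  apply no_blowup_zero ψ hcw hψ0 (show 3*c/4 < 0 by linarith) hδ'0
    (fun r hr => hdiff r hr.1)
  intro r hr
  have hr0 : 0 < r := hr.1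
  have hrδ : r ≤ δ := le_trans hr.2 hδ'δ
  have hr1 : r ≤ 1 := le_trans hrδ hδ1
  have hsmall : |ψ r| < -c/4 := by
    apply hball
    refine ⟨?_, le_of_lt hr0⟩
    rw [Metric.mem_ball, Real.dist_eq, sub_zero, abs_of_pos hr0]
    calc r ≤ ε/2 := le_trans hr.2 (min_le_right _ _)
      _ < ε := by linarith
  have hηr := hη r ⟨hr0, hrδ⟩
  unfold etaF at hηr
  have h2 : |r * (zS' r * ψ r)| ≤ -c/4 := by
    rw [abs_mul, abs_mul]
    calc |r| * (|zS' r| * |ψ r|) ≤ 1 * (1 * (-c/4)) := by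
          apply mul_le_mul
          · rw [abs_of_pos hr0]; exact hr1
          · apply mul_le_mul (abs_zS'_le_one hr1 (le_of_lt hr0))
              (le_of_lt hsmall) (abs_nonneg _) one_pos.le
          · positivity
          · norm_num
      _ = -c/4 := by ring
  have h2' : r * (zS' r * ψ r) ≤ -c/4 := le_trans (le_abs_self _) h2
  have h3 : r * zS r * deriv ψ r ≤ 3*c/4 := by nlinarith [hηr, h2']
  have hrz : 0 < r * zS r := mul_pos hr0 (zS_pos hr0)
  have hrz2 : r * zS r ≤ r^2 := by
    have := zS_le hr0
    nlinarith
  rw [le_div_iff₀ (pow_pos hr0 2)]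
  rcases le_or_gt (deriv ψ r) 0 with h | h
  · have : deriv ψ r * r^2 ≤ deriv ψ r * (r * zS r) :=
      mul_le_mul_of_nonpos_left hrz2 h
    linarith
  · have : 0 < r * zS r * deriv ψ r := mul_pos hrz h
    linarith

lemma zS_le_8div {r : ℝ} (hr : 0 < r) : zS r ≤ 8 / r := by
  unfold zS
  rw [div_le_div_iff₀ (D_pos r) hr]
  nlinarith

lemma abs_rzS'_le {r : ℝ} (hr : 0 < r) : |r * zS' r| ≤ zS r := by
  have hD := D_pos r
  have h1 : |zS' r| ≤ 1 / (1 + r^2/8) := by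
    unfold zS'
    rw [abs_div, abs_of_pos (by positivity : (0:ℝ) < (1 + r^2/8)^2)]
    rw [div_le_div_iff₀ (by positivity) hD]
    have : |1 - r^2/8| ≤ 1 + r^2/8 := by
      rw [abs_le]; constructor <;> nlinarith
    nlinarith
  rw [abs_mul, abs_of_pos hr]
  calc r * |zS' r| ≤ r * (1 / (1 + r^2/8)) :=
        mul_le_mul_of_nonneg_left h1 (le_of_lt hr)
    _ = zS r := by unfold zS; ring

/-- If `η(r₀) > 0` and `ψ > 0` on `(a, ∞)`, we get a contradiction with boundedness. -/
lemma eta_pos_contra (k : ℕ) (hk : 2 ≤ k) (ψ : ℝ → ℝ)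
    (hdiff : ∀ r ∈ Set.Ioi (0 : ℝ), DifferentiableAt ℝ ψ r)
    (hdiff2 : ∀ r ∈ Set.Ioi (0 : ℝ), DifferentiableAt ℝ (deriv ψ) r)
    (hode : ∀ r ∈ Set.Ioi (0 : ℝ),
      -(deriv (deriv ψ) r) - (1 / r) * deriv ψ r + (k : ℝ) ^ 2 * ψ r / r ^ 2 =
        ((1 + r ^ 2 / 8) ^ 2)⁻¹ * ψ r)
    {M a r₀ : ℝ} (hM : ∀ r : ℝ, 0 ≤ r → |ψ r| ≤ M)
    (ha : 0 ≤ a) (har : a < r₀)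
    (hη0 : 0 < etaF ψ r₀)
    (hpos : ∀ x ∈ Set.Ioi a, 0 < ψ x) : False := by
  have hr₀ : 0 < r₀ := lt_of_le_of_lt ha har
  set ε := etaF ψ r₀ with hε
  have hmono_ge : ∀ r, r₀ ≤ r → ε ≤ etaF ψ r := by
    intro r hr
    rcases eq_or_lt_of_le hr with rfl | hlt
    · exact le_of_eq hε
    · have hsm := etaF_strictMono k hk ψ hdiff hdiff2 hode hr₀ hlt
        (fun x hx => hpos x (lt_trans har hx.1))
      exact le_of_lt (hsm ⟨le_refl r₀, le_of_lt hlt⟩ ⟨hr, le_refl r⟩ hlt)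
  set R := max r₀ (32*M/ε) with hR
  have hR0 : 0 < R := lt_of_lt_of_le hr₀ (le_max_left _ _)
  apply no_blowup_infty ψ (show (0:ℝ) < ε/16 by linarith) hM hR0
    (fun r hr => hdiff r (lt_of_lt_of_le hR0 hr))
  intro r hr
  have hr0 : 0 < r := lt_of_lt_of_le hR0 hr
  have hrr₀ : r₀ ≤ r := le_trans (le_max_left _ _) hr
  have hηr := hmono_ge r hrr₀
  unfold etaF at hηr
  have hM0 : 0 ≤ M := le_trans (abs_nonneg _) (hM 0 le_rfl)
  have hbd : |r * (zS' r * ψ r)| ≤ ε/4 := by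
    have h1 : |r * (zS' r * ψ r)| ≤ (8/r) * M := by
      have := abs_rzS'_le hr0
      have h2 := zS_le_8div hr0
      calc |r * (zS' r * ψ r)| = |r * zS' r| * |ψ r| := by
            rw [← abs_mul]; ring_nf
        _ ≤ (8/r) * M := by
            apply mul_le_mul (le_trans this h2) (hM r (le_of_lt hr0))
              (abs_nonneg _) (by positivity)
    have h3 : 32*M/ε ≤ r := le_trans (le_max_right _ _) hr
    have h4 : (8/r) * M ≤ ε/4 := by
      rw [div_mul_eq_mul_div, div_le_div_iff₀ hr0 (by norm_num : (0:ℝ) < 4)]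
      have : 32*M ≤ ε * r := by
        rw [div_le_iff₀ (by linarith : (0:ℝ) < ε)] at h3
        linarith [h3]
      linarith
    linarith
  have hlow : -(ε/4) ≤ r * (zS' r * ψ r) := by
    have := abs_le.mp hbd
    linarith [this.1]
  have h5 : 3*ε/4 ≤ r * zS r * deriv ψ r := by nlinarith [hηr, hlow]
  have hrz : 0 < r * zS r := mul_pos hr0 (zS_pos hr0)
  have hrz8 : r * zS r ≤ 8 := by
    unfold zS
    rw [mul_div_assoc'] at *
    rw [div_le_iff₀ (D_pos r)]
    nlinarith
  have hψ' : 0 < deriv ψ r := by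
    by_contra h
    push_neg at h
    nlinarith
  nlinarith [mul_le_mul_of_nonneg_right hrz8 (le_of_lt hψ')]

lemma pos_propagate_right {ψ : ℝ → ℝ} {p q : ℝ} (hpq : p ≤ q)
    (hc : ContinuousOn ψ (Set.Icc p q)) (hp : 0 < ψ p)
    (hnz : ∀ x ∈ Set.Icc p q, ψ x ≠ 0) : ∀ x ∈ Set.Icc p q, 0 < ψ x := by
  intro x hx
  rcases lt_or_ge 0 (ψ x) with h | h
  · exact h
  have hxneg : ψ x < 0 := lt_of_le_of_ne h (hnz x hx)
  have hivt := intermediate_value_Icc' hx.1 (hc.mono (Set.Icc_subset_Icc le_rfl hx.2))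
  obtain ⟨s, hs, hψs⟩ := hivt ⟨le_of_lt hxneg, le_of_lt hp⟩
  exact absurd hψs (hnz s ⟨hs.1, le_trans hs.2 hx.2⟩)

lemma pos_propagate_left {ψ : ℝ → ℝ} {p q : ℝ} (hpq : p ≤ q)
    (hc : ContinuousOn ψ (Set.Icc p q)) (hq : 0 < ψ q)
    (hnz : ∀ x ∈ Set.Icc p q, ψ x ≠ 0) : ∀ x ∈ Set.Icc p q, 0 < ψ x := by
  intro x hx
  rcases lt_or_ge 0 (ψ x) with h | h
  · exact h
  have hxneg : ψ x < 0 := lt_of_le_of_ne h (hnz x hx)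
  have hivt := intermediate_value_Icc hx.2 (hc.mono (Set.Icc_subset_Icc hx.1 le_rfl))
  obtain ⟨s, hs, hψs⟩ := hivt ⟨le_of_lt hxneg, le_of_lt hq⟩
  exact absurd hψs (hnz s ⟨le_trans hx.1 hs.1, hs.2⟩)

lemma etaF_at_zero {ψ : ℝ → ℝ} {a : ℝ} (h : ψ a = 0) :
    etaF ψ a = a * zS a * deriv ψ a := by
  unfold etaF; rw [h]; ring

/-- Main step: a solution which is positive somewhere on `(0,∞)` yields `False`. -/
lemma key (k : ℕ) (hk : 2 ≤ k) (ψ : ℝ → ℝ)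
    (hcont : ContinuousOn ψ (Set.Ici (0 : ℝ)))
    (hψ0 : ψ 0 = 0)
    (hbdd : ∃ M : ℝ, ∀ r : ℝ, 0 ≤ r → |ψ r| ≤ M)
    (hdiff : ∀ r ∈ Set.Ioi (0 : ℝ), DifferentiableAt ℝ ψ r)
    (hdiff2 : ∀ r ∈ Set.Ioi (0 : ℝ), DifferentiableAt ℝ (deriv ψ) r)
    (hode : ∀ r ∈ Set.Ioi (0 : ℝ),
      -(deriv (deriv ψ) r) - (1 / r) * deriv ψ r + (k : ℝ) ^ 2 * ψ r / r ^ 2 =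
        ((1 + r ^ 2 / 8) ^ 2)⁻¹ * ψ r)
    {rs : ℝ} (hrs : 0 < rs) (hup : 0 < ψ rs) : False := by
  obtain ⟨M, hM⟩ := hbdd
  have hcontIcc : ∀ {p q : ℝ}, 0 ≤ p → ContinuousOn ψ (Set.Icc p q) := by
    intro p q hp
    exact hcont.mono (fun x hx => le_trans hp hx.1)
  -- the last zero before rs
  set S := Set.Icc 0 rs ∩ ψ ⁻¹' {0} with hSdef
  have hSclosed : IsClosed S :=
    (hcont.mono (fun x hx => hx.1)).preimage_isClosed_of_isClosed
      isClosed_Icc isClosed_singleton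
  have hS0 : (0:ℝ) ∈ S := ⟨⟨le_rfl, le_of_lt hrs⟩, by simp [hψ0]⟩
  have hSbdd : BddAbove S := ⟨rs, fun x hx => hx.1.2⟩
  set a := sSup S with hadef
  have haS : a ∈ S := hSclosed.csSup_mem ⟨0, hS0⟩ hSbdd
  have hψa : ψ a = 0 := haS.2
  have ha0 : 0 ≤ a := haS.1.1
  have hars : a < rs := by
    rcases lt_or_eq_of_le haS.1.2 with h | h
    · exact h
    · rw [h] at hψa; rw [hψa] at hup; exact absurd hup (lt_irrefl 0)
  have hno : ∀ x ∈ Set.Ioc a rs, ψ x ≠ 0 := by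
    intro x hx hz
    exact absurd (le_csSup hSbdd ⟨⟨le_trans ha0 (le_of_lt hx.1), hx.2⟩, hz⟩)
      (not_le.mpr hx.1)
  have hposA : ∀ x ∈ Set.Ioc a rs, 0 < ψ x := by
    intro x hx
    have hx0 : 0 ≤ x := le_trans ha0 (le_of_lt hx.1)
    exact pos_propagate_left hx.2 (hcontIcc hx0) hup
      (fun z hz => hno z ⟨lt_of_lt_of_le hx.1 hz.1, hz.2⟩) x ⟨le_rfl, hx.2⟩
  -- zeros after rs
  set T := Set.Ici rs ∩ ψ ⁻¹' {0} with hTdef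
  by_cases hT : T.Nonempty
  · -- Case 1 : there is a zero after rs
    have hTclosed : IsClosed T :=
      (hcont.mono (fun x hx => le_trans (le_of_lt hrs) hx)).preimage_isClosed_of_isClosed
        isClosed_Ici isClosed_singleton
    set b := sInf T with hbdef
    have hbT : b ∈ T := hTclosed.csInf_mem hT ⟨rs, fun x hx => hx.1⟩
    have hψb : ψ b = 0 := hbT.2
    have hrsb : rs < b := by
      rcases lt_or_eq_of_le (Set.mem_Ici.mp hbT.1) with h | h
      · exact h
      · rw [← h] at hψb; rw [hψb] at hup; exact absurd hup (lt_irrefl 0)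
    have hb0 : 0 < b := lt_trans hrs hrsb
    have hab : a < b := lt_trans hars hrsb
    have hnoT : ∀ x ∈ Set.Ico rs b, ψ x ≠ 0 := by
      intro x hx hz
      have hmem : x ∈ T := Set.mem_inter hx.1 (by simpa using hz)
      have hbb : BddBelow T := ⟨rs, fun y hy => hy.1⟩
      exact absurd (csInf_le hbb hmem) (not_le.mpr hx.2)
    have hposAB : ∀ x ∈ Set.Ioo a b, 0 < ψ x := by
      intro x hx
      rcases le_or_gt x rs with h | h
      · exact hposA x ⟨hx.1, h⟩
      · exact pos_propagate_right (le_of_lt h) (hcontIcc (le_of_lt hrs)) hup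
          (fun z hz => hnoT z ⟨hz.1, lt_of_le_of_lt hz.2 hx.2⟩) x ⟨le_of_lt h, le_rfl⟩
    have hψ'b : deriv ψ b ≤ 0 :=
      deriv_nonpos_left ψ hab (hdiff b hb0) hψb (fun x hx => le_of_lt (hposAB x hx))
    have hηb : etaF ψ b ≤ 0 := by
      rw [etaF_at_zero hψb]
      exact mul_nonpos_of_nonneg_of_nonpos
        (le_of_lt (mul_pos hb0 (zS_pos hb0))) hψ'b
    rcases eq_or_lt_of_le ha0 with ha0' | ha0'
    · -- a = 0 : blow-up at the origin
      set m := b/2 with hmdef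
      have hm0 : 0 < m := by rw [hmdef]; linarith
      have hmb : m < b := by rw [hmdef]; linarith
      have hsub : ∀ x ∈ Set.Ioo m b, 0 < ψ x := fun x hx =>
        hposAB x ⟨by rw [← ha0']; exact lt_trans hm0 hx.1, hx.2⟩
      have hsm1 := etaF_strictMono k hk ψ hdiff hdiff2 hode hm0 hmb hsub
      have hc : etaF ψ m < 0 :=
        lt_of_lt_of_le (hsm1 ⟨le_rfl, le_of_lt hmb⟩ ⟨le_of_lt hmb, le_rfl⟩ hmb) hηb
      have hbound : ∀ t ∈ Set.Ioc (0:ℝ) (min m 1), etaF ψ t ≤ etaF ψ m := by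
        intro t ht
        have htm : t ≤ m := le_trans ht.2 (min_le_left _ _)
        rcases eq_or_lt_of_le htm with h | h
        · rw [h]
        · have hsub2 : ∀ x ∈ Set.Ioo t b, 0 < ψ x := fun x hx =>
            hposAB x ⟨by rw [← ha0']; exact lt_trans ht.1 hx.1, hx.2⟩
          have hsm2 := etaF_strictMono k hk ψ hdiff hdiff2 hode ht.1
            (lt_trans h hmb) hsub2
          exact le_of_lt (hsm2 ⟨le_rfl, le_of_lt (lt_trans h hmb)⟩
            ⟨le_of_lt h, le_of_lt hmb⟩ h)
      exact eta_neg_contra ψ hcont hψ0 hdiff hc (lt_min hm0 one_pos)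
        (min_le_right _ _) hbound
    · -- 0 < a : strict monotonicity on [a, b] gives contradiction
      have hψ'a : 0 ≤ deriv ψ a :=
        deriv_nonneg_right ψ hab (hdiff a ha0') hψa (fun x hx => le_of_lt (hposAB x hx))
      have hηa : 0 ≤ etaF ψ a := by
        rw [etaF_at_zero hψa]
        exact mul_nonneg (le_of_lt (mul_pos ha0' (zS_pos ha0'))) hψ'a
      have hsm := etaF_strictMono k hk ψ hdiff hdiff2 hode ha0' hab hposAB
      exact absurd (hsm ⟨le_rfl, le_of_lt hab⟩ ⟨le_of_lt hab, le_rfl⟩ hab)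
        (not_lt.mpr (le_trans hηb hηa))
  · -- Case 2 : no zero after rs, so ψ > 0 on (a, ∞)
    have hnoT : ∀ x, rs ≤ x → ψ x ≠ 0 := by
      intro x hx hz
      exact hT (Set.nonempty_def.mpr ⟨x, Set.mem_inter hx (by simpa using hz)⟩)
    have hposInf : ∀ x ∈ Set.Ioi a, 0 < ψ x := by
      intro x hx
      rcases le_or_gt x rs with h | h
      · exact hposA x ⟨hx, h⟩
      · exact pos_propagate_right (le_of_lt h) (hcontIcc (le_of_lt hrs)) hup
          (fun z hz => hnoT z hz.1) x ⟨le_of_lt h, le_rfl⟩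
    rcases eq_or_lt_of_le ha0 with ha0' | ha0'
    · -- a = 0
      have hpos0 : ∀ x ∈ Set.Ioi (0:ℝ), 0 < ψ x := by
        intro x hx
        exact hposInf x (by rw [← ha0']; exact hx)
      by_cases hex : ∃ r₀, 0 < r₀ ∧ 0 < etaF ψ r₀
      · obtain ⟨r₀, h1, h2⟩ := hex
        exact eta_pos_contra k hk ψ hdiff hdiff2 hode hM le_rfl h1 h2 hpos0
      · push_neg at hex
        have hsm := etaF_strictMono k hk ψ hdiff hdiff2 hode
          (show (0:ℝ) < 1/2 by norm_num) (show (1:ℝ)/2 < 1 by norm_num)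
          (fun x hx => hpos0 x (Set.mem_Ioi.mpr (by linarith [hx.1])))
        have hc : etaF ψ (1/2) < 0 :=
          lt_of_lt_of_le
            (hsm ⟨le_rfl, by norm_num⟩ ⟨by norm_num, le_rfl⟩ (by norm_num))
            (hex 1 one_pos)
        have hbound : ∀ t ∈ Set.Ioc (0:ℝ) (1/2), etaF ψ t ≤ etaF ψ (1/2) := by
          intro t ht
          rcases eq_or_lt_of_le ht.2 with h | h
          · rw [h]
          · have hsm2 := etaF_strictMono k hk ψ hdiff hdiff2 hode ht.1
              (show t < 1 by linarith [ht.2])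
              (fun x hx => hpos0 x (Set.mem_Ioi.mpr (lt_trans ht.1 hx.1)))
            exact le_of_lt (hsm2 ⟨le_rfl, by linarith⟩ ⟨le_of_lt h, by norm_num⟩ h)
        exact eta_neg_contra ψ hcont hψ0 hdiff hc (by norm_num) (by norm_num) hbound
    · -- 0 < a
      have hψ'a : 0 ≤ deriv ψ a :=
        deriv_nonneg_right ψ (show a < a + 1 by linarith) (hdiff a ha0') hψa
          (fun x hx => le_of_lt (hposInf x hx.1))
      have hηa : 0 ≤ etaF ψ a := by
        rw [etaF_at_zero hψa]
        exact mul_nonneg (le_of_lt (mul_pos ha0' (zS_pos ha0'))) hψ'a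
      have hsm := etaF_strictMono k hk ψ hdiff hdiff2 hode ha0'
        (show a < a + 1 by linarith) (fun x hx => hposInf x hx.1)
      have hη1 : 0 < etaF ψ (a+1) :=
        lt_of_le_of_lt hηa
          (hsm ⟨le_rfl, by linarith⟩ ⟨by linarith, le_rfl⟩ (by linarith))
      exact eta_pos_contra k hk ψ hdiff hdiff2 hode hM (le_of_lt ha0')
        (show a < a + 1 by linarith) hη1 hposInf

end

/-- for an integer `k ≥ 2`, the ODE
`-ψ'' - (1/r)ψ' + k²ψ/r² = (1 + r²/8)^{-2} ψ` on `(0,∞)` has no nontrivial bounded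
solution vanishing (continuously) at `0`. -/
theorem stmt8 (k : ℕ) (hk : 2 ≤ k) (ψ : ℝ → ℝ)
    (hcont : ContinuousOn ψ (Set.Ici (0 : ℝ)))
    (hψ0 : ψ 0 = 0)
    (hbdd : ∃ M : ℝ, ∀ r : ℝ, 0 ≤ r → |ψ r| ≤ M)
    (hdiff : ∀ r ∈ Set.Ioi (0 : ℝ), DifferentiableAt ℝ ψ r)
    (hdiff2 : ∀ r ∈ Set.Ioi (0 : ℝ), DifferentiableAt ℝ (deriv ψ) r)
    (hode : ∀ r ∈ Set.Ioi (0 : ℝ),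
      -(deriv (deriv ψ) r) - (1 / r) * deriv ψ r + (k : ℝ) ^ 2 * ψ r / r ^ 2 =
        ((1 + r ^ 2 / 8) ^ 2)⁻¹ * ψ r) :
    ∀ r : ℝ, 0 ≤ r → ψ r = 0 := by
  intro r hr
  by_contra hne
  rcases eq_or_lt_of_le hr with hr0 | hr0
  · exact hne (hr0 ▸ hψ0)
  rcases lt_or_gt_of_ne hne with hneg | hpos
  · -- ψ r < 0 : apply `key` to `-ψ`
    set φ : ℝ → ℝ := fun x => -ψ x with hφ
    have hderiv_eq : deriv φ = fun x => -deriv ψ x := funext fun x => deriv.neg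
    have hode' : ∀ s ∈ Set.Ioi (0 : ℝ),
        -(deriv (deriv φ) s) - (1 / s) * deriv φ s + (k : ℝ) ^ 2 * φ s / s ^ 2 =
          ((1 + s ^ 2 / 8) ^ 2)⁻¹ * φ s := by
      intro s hs
      have h1 : deriv (deriv φ) s = -(deriv (deriv ψ) s) := by
        rw [hderiv_eq]
        exact deriv.neg
      have h2 : deriv φ s = -deriv ψ s := by rw [hderiv_eq]
      have h := hode s hs
      rw [h1, h2]
      simp only [hφ]
      ring_nf
      ring_nf at h
      linarith [h]
    apply key k hk φ hcont.neg (by simp [hφ, hψ0]) 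
      (by obtain ⟨M, hM⟩ := hbdd; exact ⟨M, fun s hs => by simpa [hφ] using hM s hs⟩)
      (fun s hs => (hdiff s hs).neg)
      (fun s hs => by rw [hderiv_eq]; exact (hdiff2 s hs).neg)
      hode' hr0
    simp only [hφ]
    linarith
  · exact key k hk ψ hcont hψ0 hbdd hdiff hdiff2 hode hr0 hpos
end
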